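/- A 5-ring is 4K_1-free if and only if it is 2P_3-free. -/

import Mathlib

namespace Paper

open SimpleGraph

variable {V : Type} {W : Type}

/-- `G` contains no induced copy of `H` (there is no graph embedding of `H` into `G`). -/
def IndFree (G : SimpleGraph V) (H : SimpleGraph W) : Prop :=
  IsEmpty (H ↪g G)

/-- `2P₃`: the disjoint union of two paths on three vertices. -/
def twoP3 : SimpleGraph (Fin 3 ⊕ Fin 3) :=
  SimpleGraph.fromRel (fun u v =>
    match u, v with
    | Sum.inl a, Sum.inl b => (pathGraph 3).Adj a b
    | Sum.inr a, Sum.inr b => (pathGraph 3).Adj a b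
    | _, _ => False)

/-- `4K₁`: the edgeless graph on four vertices. -/
def fourK1 : SimpleGraph (Fin 4) := ⊥

/-- The cycle on `n` vertices (for `n ≥ 3`). -/
def cycleG (n : ℕ) : SimpleGraph (ZMod n) :=
  SimpleGraph.fromRel (fun u v => v = u + 1)

/-- The graph `T₀`: vertices `0,…,8` stand for `a₀,a₁,b₀,b₁,b₂,b₃,c₁,c₂,c₃`. -/
def T0 : SimpleGraph (Fin 9) :=
  SimpleGraph.fromRel (fun u v =>
    (u, v) ∈ ([(0,1),(0,2),(0,4),(0,5),(1,3),(1,4),(1,5),(2,6),(3,6),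
               (4,7),(5,8),(6,7),(6,8),(7,8)] : List (Fin 9 × Fin 9)))

/-- The `t`-pentagon: `Sum.inl ()` is the vertex `a`, `Sum.inr (Sum.inl i)` is `bᵢ`,
and `Sum.inr (Sum.inr i)` is `cᵢ`. -/
def pentagon (t : ℕ) : SimpleGraph (Unit ⊕ Fin t ⊕ Fin t) :=
  SimpleGraph.fromRel (fun u v =>
    match u, v with
    | Sum.inl _, Sum.inr (Sum.inl _) => True
    | Sum.inr (Sum.inl i), Sum.inr (Sum.inr j) => i = j
    | Sum.inr (Sum.inr _), Sum.inr (Sum.inr _) => True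
    | _, _ => False)

/-- `X` is complete to `Y` in `G`. -/
def CompleteTo (G : SimpleGraph V) (X Y : Set V) : Prop :=
  ∀ x ∈ X, ∀ y ∈ Y, G.Adj x y

/-- `X` is anticomplete to `Y` in `G`. -/
def AnticompleteTo (G : SimpleGraph V) (X Y : Set V) : Prop :=
  ∀ x ∈ X, ∀ y ∈ Y, ¬ G.Adj x y

/-- A simplicial vertex: its neighborhood is a clique. -/
def IsSimplicial (G : SimpleGraph V) (v : V) : Prop :=
  G.IsClique (G.neighborSet v)

/-- A universal vertex: adjacent to all other vertices. -/
def IsUniversal (G : SimpleGraph V) (v : V) : Prop :=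
  ∀ w, w ≠ v → G.Adj v w




/-- A 5-basket partition `(A; B 0, B 1, B 2; C 0, C 1, C 2; F)` of `Q`. -/
def IsFiveBasketPartition (Q : SimpleGraph W) (A : Set W) (B C : Fin 3 → Set W)
    (F : Set W) : Prop :=
  (∀ i, Disjoint A (B i)) ∧ (∀ i, Disjoint A (C i)) ∧ Disjoint A F ∧
  (∀ i j, i ≠ j → Disjoint (B i) (B j)) ∧
  (∀ i j, i ≠ j → Disjoint (C i) (C j)) ∧
  (∀ i j, Disjoint (B i) (C j)) ∧
  (∀ i, Disjoint (B i) F) ∧ (∀ i, Disjoint (C i) F) ∧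
  (A ∪ (⋃ i, B i) ∪ (⋃ i, C i) ∪ F = Set.univ) ∧
  Q.IsClique A ∧ (∀ i, Q.IsClique (B i)) ∧ (∀ i, Q.IsClique (C i)) ∧ Q.IsClique F ∧
  A.Nonempty ∧ (∀ i, (B i).Nonempty) ∧ (∀ i, (C i).Nonempty) ∧
  (∀ i j, i ≠ j → AnticompleteTo Q (B i) (B j)) ∧
  (∀ i j, i ≠ j → CompleteTo Q (C i) (C j)) ∧
  (∀ i, AnticompleteTo Q A (C i)) ∧
  (∀ i, CompleteTo Q (B i) (C i)) ∧
  (∀ i j, i ≠ j → AnticompleteTo Q (B i) (C j)) ∧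
  (∃ istar : Fin 3,
    (∀ i, i ≠ istar → CompleteTo Q A (B i)) ∧
    (∀ a ∈ A, ∀ a' ∈ A,
      Q.neighborSet a ∩ B istar ⊆ Q.neighborSet a' ∩ B istar ∨
      Q.neighborSet a' ∩ B istar ⊆ Q.neighborSet a ∩ B istar) ∧
    (∃ a ∈ A, B istar ⊆ Q.neighborSet a)) ∧
  (∃ jstar : Fin 3,
    CompleteTo Q F (B jstar ∪ C jstar ∪ F)ᶜ ∧
    AnticompleteTo Q F (B jstar ∪ C jstar))

/-- A 5-basket. -/
def IsFiveBasket (Q : SimpleGraph W) : Prop :=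
  ∃ (A : Set W) (B C : Fin 3 → Set W) (F : Set W), IsFiveBasketPartition Q A B C F

/-- All conditions of a `t`-villa partition except that the parts exhaust the vertex set. -/
def VillaCore {t : ℕ} (Q : SimpleGraph W) (A : Set W) (B C : Fin t → Set W) : Prop :=
  (∀ i, Disjoint A (B i)) ∧ (∀ i, Disjoint A (C i)) ∧
  (∀ i j, i ≠ j → Disjoint (B i) (B j)) ∧
  (∀ i j, i ≠ j → Disjoint (C i) (C j)) ∧
  (∀ i j, Disjoint (B i) (C j)) ∧
  Q.IsClique A ∧ (∀ i, Q.IsClique (B i)) ∧ (∀ i, Q.IsClique (C i)) ∧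
  A.Nonempty ∧ (∀ i, (B i).Nonempty) ∧ (∀ i, (C i).Nonempty) ∧
  (∀ i, CompleteTo Q A (B i)) ∧ (∀ i, AnticompleteTo Q A (C i)) ∧
  (∀ i j, i ≠ j → AnticompleteTo Q (B i) (B j)) ∧
  (∀ i j, i ≠ j → CompleteTo Q (C i) (C j)) ∧
  (∀ i j, i ≠ j → AnticompleteTo Q (B i) (C j)) ∧
  (∀ i, ∀ b ∈ B i, ∀ b' ∈ B i,
     Q.neighborSet b ∩ C i ⊆ Q.neighborSet b' ∩ C i ∨
     Q.neighborSet b' ∩ C i ⊆ Q.neighborSet b ∩ C i) ∧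
  (∀ i, ∀ b ∈ B i, (Q.neighborSet b ∩ C i).Nonempty) ∧
  (∀ i, ∃ b ∈ B i, C i ⊆ Q.neighborSet b)

/-- A `t`-villa partition `(A; B 0,…,B (t-1); C 0,…,C (t-1))` of `Q`. -/
def IsVillaPartition {t : ℕ} (Q : SimpleGraph W) (A : Set W) (B C : Fin t → Set W) : Prop :=
  VillaCore Q A B C ∧ A ∪ (⋃ i, B i) ∪ (⋃ i, C i) = Set.univ

/-- A `t`-villa. -/
def IsTVilla (t : ℕ) (Q : SimpleGraph W) : Prop :=
  ∃ (A : Set W) (B C : Fin t → Set W), IsVillaPartition Q A B C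

/-- A villa: a `t`-villa for some `t ≥ 3`. -/
def IsVilla (Q : SimpleGraph W) : Prop :=
  ∃ t, 3 ≤ t ∧ IsTVilla t Q

/-- A `t`-mansion partition `(A; B; C; F; X; Y)` of `Q`. -/
def IsMansionPartition {t : ℕ} (Q : SimpleGraph W) (A : Set W) (B C : Fin t → Set W)
    (F X Y : Set W) : Prop :=
  VillaCore Q A B C ∧
  Disjoint A F ∧ Disjoint A X ∧ Disjoint A Y ∧
  (∀ i, Disjoint (B i) F) ∧ (∀ i, Disjoint (B i) X) ∧ (∀ i, Disjoint (B i) Y) ∧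
  (∀ i, Disjoint (C i) F) ∧ (∀ i, Disjoint (C i) X) ∧ (∀ i, Disjoint (C i) Y) ∧
  Disjoint F X ∧ Disjoint F Y ∧ Disjoint X Y ∧
  (A ∪ (⋃ i, B i) ∪ (⋃ i, C i) ∪ F ∪ X ∪ Y = Set.univ) ∧
  Q.IsClique F ∧ Q.IsClique X ∧ Q.IsClique Y ∧ F.Nonempty ∧
  (∃ jstar : Fin t,
    CompleteTo Q F A ∧
    (∀ i, i ≠ jstar → CompleteTo Q F (B i)) ∧
    (∀ i, i ≠ jstar → CompleteTo Q F (C i)) ∧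
    AnticompleteTo Q F (B jstar) ∧ AnticompleteTo Q F (C jstar) ∧
    CompleteTo Q (B jstar) (C jstar) ∧
    CompleteTo Q X A ∧ CompleteTo Q X (B jstar) ∧
    (∀ i, i ≠ jstar → AnticompleteTo Q X (B i)) ∧
    (∀ i, AnticompleteTo Q X (C i))) ∧
  CompleteTo Q F X ∧ CompleteTo Q F Y ∧
  AnticompleteTo Q X Y ∧
  (∀ i, CompleteTo Q Y (C i)) ∧
  AnticompleteTo Q Y A ∧ (∀ i, AnticompleteTo Q Y (B i))

/-- A `t`-mansion. -/
def IsTMansion (t : ℕ) (Q : SimpleGraph W) : Prop :=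
  ∃ (A : Set W) (B C : Fin t → Set W) (F X Y : Set W),
    IsMansionPartition Q A B C F X Y

/-- A mansion: a `t`-mansion for some `t ≥ 3`. -/
def IsMansion (Q : SimpleGraph W) : Prop :=
  ∃ t, 3 ≤ t ∧ IsTMansion t Q

/-- A `t`-frame partition of `Q`. -/
def IsFramePartition {t : ℕ} (Q : SimpleGraph W) (A : Set W) (B C : Fin t → Set W) : Prop :=
  (∀ i, Disjoint A (B i)) ∧ (∀ i, Disjoint A (C i)) ∧
  (∀ i j, i ≠ j → Disjoint (B i) (B j)) ∧
  (∀ i j, i ≠ j → Disjoint (C i) (C j)) ∧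
  (∀ i j, Disjoint (B i) (C j)) ∧
  (A ∪ (⋃ i, B i) ∪ (⋃ i, C i) = Set.univ) ∧
  A.Nonempty ∧ (∀ i, (B i).Nonempty) ∧ (∀ i, (C i).Nonempty) ∧
  (∀ a ∈ A, ∃ i j : Fin t, i ≠ j ∧ (∃ b ∈ B i, Q.Adj a b) ∧ (∃ b ∈ B j, Q.Adj a b)) ∧
  (∀ i, AnticompleteTo Q A (C i)) ∧
  (∀ i j, i ≠ j → AnticompleteTo Q (B i) (B j)) ∧
  (∀ i j, i ≠ j → CompleteTo Q (C i) (C j)) ∧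
  (∀ i j, i ≠ j → AnticompleteTo Q (B i) (C j)) ∧
  (∀ i, ∀ b ∈ B i, ∃ a ∈ A, Q.Adj b a) ∧
  (∀ i, ∀ b ∈ B i, ∃ c ∈ C i, Q.Adj b c) ∧
  (∀ i, ∀ c ∈ C i, ∃ b ∈ B i, Q.Adj c b)

/-- A `k`-ring partition of `Q` (indices modulo `k`). -/
def IsRingPartition {k : ℕ} (Q : SimpleGraph W) (X : ZMod k → Set W) : Prop :=
  (∀ i j, i ≠ j → Disjoint (X i) (X j)) ∧
  (⋃ i, X i) = Set.univ ∧
  (∀ i, (X i).Nonempty) ∧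
  (∀ i, ∀ u ∈ X i, X i ⊆ insert u (Q.neighborSet u)) ∧
  (∀ i, ∀ u ∈ X i, ∀ u' ∈ X i,
     insert u (Q.neighborSet u) ⊆ insert u' (Q.neighborSet u') ∨
     insert u' (Q.neighborSet u') ⊆ insert u (Q.neighborSet u)) ∧
  (∀ i, ∀ u ∈ X i, insert u (Q.neighborSet u) ⊆ X (i-1) ∪ X i ∪ X (i+1)) ∧
  (∀ i, ∃ u ∈ X i, X (i-1) ∪ X i ∪ X (i+1) ⊆ insert u (Q.neighborSet u))

/-- A `k`-ring. -/
def IsRing (k : ℕ) (Q : SimpleGraph W) : Prop :=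
  ∃ X : ZMod k → Set W, IsRingPartition Q X

/-- A 5-crown. -/
def IsFiveCrown (Q : SimpleGraph W) : Prop :=
  ∃ X : ZMod 5 → Set W, IsRingPartition Q X ∧
    ∃ istar : ZMod 5, CompleteTo Q (X (istar - 1)) (X (istar - 2)) ∧
      CompleteTo Q (X (istar + 1)) (X (istar + 2))


/-!
Every `2P₃` contains a `4K₁`, namely the four ends of its paths. Conversely, each part of a
ring partition is a clique and only cyclically consecutive parts see each other, so four
independent vertices of a 5-ring lie in four consecutive parts `X a, …, X (a + 3)`, say
`p, q, r, s`. A vertex `u ∈ X a` dominating `X a ∪ X (a + 1)` and a vertex `w ∈ X (a + 3)`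
dominating `X (a + 2) ∪ X (a + 3)` give induced paths `p u q` and `r w s` with no edges between
them.
-/

lemma IndFree.of_embedding {U : Type} {G : SimpleGraph V} {H : SimpleGraph W} {H' : SimpleGraph U}
    (f : H ↪g H') (h : IndFree G H) : IndFree G H' :=
  ⟨fun e => h.false (e.comp f)⟩

@[simp]
lemma twoP3_adj_inl_inl (a b : Fin 3) :
    twoP3.Adj (.inl a) (.inl b) ↔ (pathGraph 3).Adj a b := by
  simp only [twoP3, fromRel_adj, ne_eq, Sum.inl.injEq]
  exact ⟨fun h => h.2.elim id .symm, fun h => ⟨h.ne, .inl h⟩⟩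

@[simp]
lemma twoP3_adj_inr_inr (a b : Fin 3) :
    twoP3.Adj (.inr a) (.inr b) ↔ (pathGraph 3).Adj a b := by
  simp only [twoP3, fromRel_adj, ne_eq, Sum.inr.injEq]
  exact ⟨fun h => h.2.elim id .symm, fun h => ⟨h.ne, .inl h⟩⟩

@[simp]
lemma twoP3_not_adj_inl_inr (a b : Fin 3) : ¬ twoP3.Adj (.inl a) (.inr b) := by
  simp [twoP3]

@[simp]
lemma twoP3_not_adj_inr_inl (a b : Fin 3) : ¬ twoP3.Adj (.inr a) (.inl b) := by
  simp [twoP3]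

def fourK1ToTwoP3 : fourK1 ↪g twoP3 where
  toFun := ![.inl 0, .inl 2, .inr 0, .inr 2]
  inj' := by decide
  map_rel_iff' := by
    intro a b
    fin_cases a <;> fin_cases b <;> simp [fourK1, pathGraph_adj]

def pathGraphThreeEmbedding {G : SimpleGraph V} {p u q : V} (hpu : G.Adj p u)
    (huq : G.Adj u q) (hpq : ¬ G.Adj p q) (hne : p ≠ q) : pathGraph 3 ↪g G where
  toFun := ![p, u, q]
  inj' := by
    intro x y h
    fin_cases x <;> fin_cases y <;> simp_all [hpu.ne, huq.ne, hpu.ne.symm, huq.ne.symm]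
  map_rel_iff' := by
    intro x y
    change G.Adj (![p, u, q] x) (![p, u, q] y) ↔ _
    fin_cases x <;> fin_cases y <;> simp_all [pathGraph_adj, G.adj_comm]

lemma range_pathGraphThreeEmbedding {G : SimpleGraph V} {p u q : V} (hpu : G.Adj p u)
    (huq : G.Adj u q) (hpq : ¬ G.Adj p q) (hne : p ≠ q) :
    Set.range (pathGraphThreeEmbedding hpu huq hpq hne) = {p, u, q} := by
  change Set.range ![p, u, q] = _
  simp only [Matrix.range_cons, Matrix.range_empty, Set.union_empty, Set.singleton_union]

def twoP3EmbeddingOfAnticomplete {G : SimpleGraph V} (f g : pathGraph 3 ↪g G)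
    (hfg : AnticompleteTo G (Set.range f) (Set.range g)) : twoP3 ↪g G where
  toFun := Sum.elim f g
  inj' := by
    -- a common vertex `f x = g y` would be adjacent to `g` of a neighbour of `y`
    have hfg' : ∀ x y, ¬ G.Adj (f x) (g y) := fun x y => hfg _ ⟨x, rfl⟩ _ ⟨y, rfl⟩
    have hnbr : ∀ y : Fin 3, ∃ y', (pathGraph 3).Adj y y' := by
      simp only [pathGraph_adj]; decide
    rintro (x | x) (y | y) (h : Sum.elim f g _ = Sum.elim f g _) <;>
      simp only [Sum.elim_inl, Sum.elim_inr] at h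
    · rw [f.injective h]
    · obtain ⟨y', hy'⟩ := hnbr y
      exact (hfg' x y' (h ▸ g.map_adj_iff.mpr hy')).elim
    · obtain ⟨y', hy'⟩ := hnbr y
      exact (hfg' y' x (h ▸ f.map_adj_iff.mpr hy').symm).elim
    · rw [g.injective h]
  map_rel_iff' := by
    intro a b
    change G.Adj (Sum.elim f g a) (Sum.elim f g b) ↔ _
    have hfg' : ∀ x y, ¬ G.Adj (f x) (g y) := fun x y => hfg _ ⟨x, rfl⟩ _ ⟨y, rfl⟩
    have hgf' : ∀ x y, ¬ G.Adj (g x) (f y) := fun x y h => hfg' y x h.symm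
    rcases a with x | x <;> rcases b with y | y <;> simp [hfg', hgf']

section RingPartition

variable {k : ℕ} {Q : SimpleGraph W} {X : ZMod k → Set W}

lemma IsRingPartition.exists_mem (hX : IsRingPartition Q X) (v : W) : ∃ i, v ∈ X i :=
  Set.mem_iUnion.mp (hX.2.1 ▸ Set.mem_univ v)

lemma IsRingPartition.ne_of_mem (hX : IsRingPartition Q X) {i j : ZMod k} {x y : W}
    (hx : x ∈ X i) (hy : y ∈ X j) (hij : i ≠ j) : x ≠ y := by
  rintro rfl
  exact Set.disjoint_left.mp (hX.1 i j hij) hx hy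

lemma IsRingPartition.isClique (hX : IsRingPartition Q X) (i : ZMod k) : Q.IsClique (X i) :=
  fun x hx _ hy hxy => (Set.mem_insert_iff.mp (hX.2.2.2.1 i x hx hy)).resolve_left hxy.symm

lemma IsRingPartition.ne_of_not_adj (hX : IsRingPartition Q X) {i j : ZMod k} {x y : W}
    (hx : x ∈ X i) (hy : y ∈ X j) (hxy : x ≠ y) (h : ¬ Q.Adj x y) : i ≠ j := by
  rintro rfl
  exact h (hX.isClique i hx hy hxy)

lemma IsRingPartition.not_adj_of_mem (hX : IsRingPartition Q X) {i j : ZMod k} {x y : W}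
    (hx : x ∈ X i) (hy : y ∈ X j) (hij : j - i ∉ ({-1, 0, 1} : Finset (ZMod k))) :
    ¬ Q.Adj x y := by
  intro hxy
  have hj : ∀ {l}, y ∈ X l → j = l := fun hy' => by_contra fun h => hX.ne_of_mem hy hy' h rfl
  rcases hX.2.2.2.2.2.1 i x hx (Set.mem_insert_of_mem _ hxy) with (hy' | hy') | hy' <;>
    simp [hj hy'] at hij

lemma IsRingPartition.exists_adj_adj_of_mem (hX : IsRingPartition Q X) {i : ZMod k} {p q : W}
    (hp : p ∈ X i) (hq : q ∈ X (i - 1) ∪ X i ∪ X (i + 1)) (hpq : ¬ Q.Adj p q) (hne : p ≠ q) :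
    ∃ u ∈ X i, Q.Adj p u ∧ Q.Adj u q := by
  obtain ⟨u, hu, hcover⟩ := hX.2.2.2.2.2.2 i
  have hp' : p = u ∨ Q.Adj u p := hcover (Or.inl (Or.inr hp))
  have hq' : q = u ∨ Q.Adj u q := hcover hq
  have huq : Q.Adj u q := hq'.resolve_left fun hqu => by
    subst hqu
    exact hpq (hp'.resolve_left hne).symm
  exact ⟨u, hu, (hp'.resolve_left fun hpu => hpq (hpu ▸ huq)).symm, huq⟩

end RingPartition

set_option maxRecDepth 4000 in
lemma exists_four_consecutive_of_injective (f : Fin 4 → ZMod 5) (hf : Function.Injective f) :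
    ∃ a : ZMod 5, (∃ s, f s = a) ∧ (∃ s, f s = a + 1) ∧ (∃ s, f s = a + 2) ∧
      (∃ s, f s = a + 3) := by
  revert f
  decide

section FiveRing

variable {Q : SimpleGraph W} {X : ZMod 5 → Set W}

lemma IsRingPartition.nonempty_twoP3_embedding (hX : IsRingPartition Q X) {a : ZMod 5}
    {p q r s : W} (hp : p ∈ X a) (hq : q ∈ X (a + 1)) (hr : r ∈ X (a + 2)) (hs : s ∈ X (a + 3))
    (hpq : ¬ Q.Adj p q) (hqr : ¬ Q.Adj q r) (hrs : ¬ Q.Adj r s) :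
    Nonempty (twoP3 ↪g Q) := by
  have hpq' : p ≠ q := hX.ne_of_mem hp hq (by simp only [ne_eq, left_eq_add]; decide)
  have hrs' : r ≠ s := hX.ne_of_mem hr hs (by simp only [ne_eq, add_right_inj]; decide)
  obtain ⟨u, hu, hpu, huq⟩ := hX.exists_adj_adj_of_mem hp (.inr hq) hpq hpq'
  obtain ⟨w, hw, hsw, hwr⟩ := hX.exists_adj_adj_of_mem hs
    (.inl (.inl (by rwa [show a + 3 - 1 = a + 2 by ring]))) (fun h => hrs h.symm) hrs'.symm
  refine ⟨twoP3EmbeddingOfAnticomplete (pathGraphThreeEmbedding hpu huq hpq hpq')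
    (pathGraphThreeEmbedding hwr.symm hsw.symm hrs hrs') ?_⟩
  rw [range_pathGraphThreeEmbedding, range_pathGraphThreeEmbedding]
  rintro _ (rfl | rfl | rfl) _ (rfl | rfl | rfl)
  all_goals first
    | exact hqr
    | exact hX.not_adj_of_mem ‹_› ‹_›
        (by simp only [add_sub_cancel_left, add_sub_add_left_eq_sub]; decide)

lemma IsRingPartition.nonempty_twoP3_embedding_of_fourK1 (hX : IsRingPartition Q X)
    (e : fourK1 ↪g Q) : Nonempty (twoP3 ↪g Q) := by
  have hind : ∀ s t, ¬ Q.Adj (e s) (e t) := fun s t h => by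
    simpa [fourK1] using e.map_adj_iff.mp h
  choose idx hidx using fun t => hX.exists_mem (e t)
  have hidx_inj : Function.Injective idx := fun s t hst => by_contra fun hne =>
    hX.ne_of_not_adj (hidx s) (hidx t) (e.injective.ne hne) (hind s t) hst
  obtain ⟨a, ⟨s₀, rfl⟩, ⟨s₁, h₁⟩, ⟨s₂, h₂⟩, ⟨s₃, h₃⟩⟩ :=
    exists_four_consecutive_of_injective idx hidx_inj
  exact hX.nonempty_twoP3_embedding (hidx s₀) (h₁ ▸ hidx s₁) (h₂ ▸ hidx s₂) (h₃ ▸ hidx s₃)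
    (hind _ _) (hind _ _) (hind _ _)

end FiveRing

theorem statement_13_general {W : Type} (R : SimpleGraph W)
    (hR : IsRing 5 R) :
    IndFree R fourK1 ↔ IndFree R twoP3 := by
  obtain ⟨X, hX⟩ := hR
  refine ⟨IndFree.of_embedding fourK1ToTwoP3, fun h => ⟨fun e => ?_⟩⟩
  obtain ⟨f⟩ := hX.nonempty_twoP3_embedding_of_fourK1 e
  exact h.false f

theorem statement_13 {W : Type} [Fintype W] (R : SimpleGraph W)
    (hR : IsRing 5 R) :
    IndFree R fourK1 ↔ IndFree R twoP3 :=
  statement_13_general R hR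

end Paper
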